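/- Let μ > 0, B ≥ 0, β and γ be real numbers with β > 1/μ, γ > 0, and γ + 1 ≥ β·μ. Define the diminishing step sizes η t = β/(t + γ) for t ≥ 1, and let Δ : ℕ → ℝ be a sequence with Δ t ≥ 0 for all t ≥ 1 satisfying the recursion Δ (t+1) ≤ (1 − η t · μ) · Δ t + (η t)² · B for all t ≥ 1. Set v = max (β²·B/(β·μ − 1)) ((γ + 1)·Δ 1). Then for every t ≥ 1, Δ t ≤ v/(γ + t). -/
import Mathlib


theorem fedavg_sequence_lemma
    (μ B β γ : ℝ) (hμ : 0 < μ) (hB : 0 ≤ B)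
    (hβ : 1 / μ < β) (hγ : 0 < γ) (hγβ : β * μ ≤ γ + 1)
    (Δ : ℕ → ℝ) (hΔ : ∀ t : ℕ, 1 ≤ t → 0 ≤ Δ t)
    (hrec : ∀ t : ℕ, 1 ≤ t →
      Δ (t + 1) ≤ (1 - (β / ((t : ℝ) + γ)) * μ) * Δ t + (β / ((t : ℝ) + γ)) ^ 2 * B) :
    ∀ t : ℕ, 1 ≤ t →
      Δ t ≤ max (β ^ 2 * B / (β * μ - 1)) ((γ + 1) * Δ 1) / (γ + (t : ℝ)) := by
  set v := max (β ^ 2 * B / (β * μ - 1)) ((γ + 1) * Δ 1) with hv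
  have hμβ : 1 < β * μ := by
    rw [div_lt_iff₀ hμ] at hβ; linarith
  have hv0 : 0 ≤ v :=
    le_trans (div_nonneg (by positivity) (by linarith)) (le_max_left _ _)
  have hvB : β ^ 2 * B ≤ (β * μ - 1) * v := by
    have := le_max_left (β ^ 2 * B / (β * μ - 1)) ((γ + 1) * Δ 1)
    rw [div_le_iff₀ (by linarith)] at this
    linarith [this]
  intro t ht
  induction t, ht using Nat.le_induction with
  | base =>
    rw [le_div_iff₀ (by push_cast; linarith)]
    push_cast
    calc Δ 1 * (γ + 1) = (γ + 1) * Δ 1 := by ring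
    _ ≤ v := le_max_right _ _
  | succ t ht ih =>
    have hs0 : (0:ℝ) < (t:ℝ) + γ := by
      have : (1:ℝ) ≤ (t:ℝ) := by exact_mod_cast ht
      linarith
    set s : ℝ := (t:ℝ) + γ with hsdef
    have hβμs : β * μ ≤ s := by
      have : (1:ℝ) ≤ (t:ℝ) := by exact_mod_cast ht
      simp only [hsdef]; linarith
    have hcontr : 0 ≤ 1 - β / s * μ := by
      rw [sub_nonneg, div_mul_eq_mul_div, div_le_one hs0]; exact hβμs
    have step := hrec t ht
    have ih' : Δ t ≤ v / s := by
      have := ih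
      rwa [show γ + (t:ℝ) = s by simp [hsdef]; ring] at this
    have key : (1 - β / s * μ) * (v / s) + (β / s) ^ 2 * B ≤ v / (s + 1) := by
      rw [div_pow]
      have h1 : (1 - β / s * μ) * (v / s) + β ^ 2 / s ^ 2 * B
          = ((s - β * μ) * v + β ^ 2 * B) / s ^ 2 := by
        field_simp
      rw [h1, div_le_div_iff₀ (by positivity) (by linarith)]
      nlinarith [hvB, hv0, hβμs, hs0, mul_nonneg hv0 hs0.le]
    calc Δ (t + 1) ≤ (1 - β / s * μ) * Δ t + (β / s) ^ 2 * B := step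
      _ ≤ (1 - β / s * μ) * (v / s) + (β / s) ^ 2 * B := by
          gcongr
      _ ≤ v / (s + 1) := key
      _ = v / (γ + ((t + 1 : ℕ) : ℝ)) := by
          congr 1
          push_cast
          rw [hsdef]
          ring
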